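/- Let f, g : X → (-∞, +∞] be proper lower semicontinuous convex functions on a real Banach space X with dom f ∩ dom g ≠ ∅. If for every x ∈ dom f ∩ dom g and every ε > 0 the set ∂_ε f(x) + ∂_ε g(x) is weak* closed, then (f+g)* = f* □ g* on X*, and consequently inf_X (f+g) = sup_{x* ∈ X*} { −f*(x*) − g*(−x*) }. -/

import Mathlib

open Pointwise Topology Set

noncomputable section

variable {X : Type*} [NormedAddCommGroup X] [NormedSpace ℝ X]

/-- `f` is proper: never `-∞` and finite somewhere. -/
def EProper (f : X → EReal) : Prop := (∀ x, f x ≠ ⊥) ∧ ∃ x, f x ≠ ⊤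

/-- effective domain of `f`. -/
def edom (f : X → EReal) : Set X := {x | f x < ⊤}

/-- convexity for extended-real-valued functions. -/
def EConvex (f : X → EReal) : Prop :=
  ∀ x y : X, ∀ t : ℝ, 0 ≤ t → t ≤ 1 →
    f (t • x + (1 - t) • y) ≤ (t : EReal) * f x + ((1 - t : ℝ) : EReal) * f y

/-- the ε-subdifferential of `f` at `x`, a subset of the weak* dual. -/
def epsSubdiff (f : X → EReal) (ε : ℝ) (x : X) : Set (WeakDual ℝ X) :=
  {p | f x ≠ ⊤ ∧ f x ≠ ⊥ ∧ ∀ y : X, (p (y - x) : EReal) + f x ≤ f y + (ε : EReal)}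

/-- the (exact) subdifferential of `f` at `x`. -/
def subdiff (f : X → EReal) (x : X) : Set (WeakDual ℝ X) := epsSubdiff f 0 x

/-- the Fenchel conjugate of `f`. -/
def fconj (f : X → EReal) (p : WeakDual ℝ X) : EReal := ⨆ x : X, (p x : EReal) - f x

/-- the infimal convolution of finitely many functions on the dual. -/
def infConv {m : ℕ} (g : Fin m → WeakDual ℝ X → EReal) (p : WeakDual ℝ X) : EReal :=
  ⨅ (y : Fin m → WeakDual ℝ X) (_ : ∑ i, y i = p), ∑ i, g i (y i)

/-- exactness (attainment) of the infimal convolution at `p`. -/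
def infConvExactAt {m : ℕ} (g : Fin m → WeakDual ℝ X → EReal) (p : WeakDual ℝ X) : Prop :=
  ∃ y : Fin m → WeakDual ℝ X, ∑ i, y i = p ∧ infConv g p = ∑ i, g i (y i)

/-- the epigraph of the Fenchel conjugate of `f`, in `X* × ℝ`. -/
def epiConj (f : X → EReal) : Set ((WeakDual ℝ X) × ℝ) :=
  {q | fconj f q.1 ≤ (q.2 : EReal)}

/-!
The inequality `(f + g)* ≤ f* □ g*` is Fenchel–Young. For the reverse one, separation in
`X* × ℝ` (whose weak*-continuous functionals are evaluations at points of `X`) together with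
`f = f**` and `g = g**` shows that `epi (f + g)*` lies in the weak* closure of `epi f* + epi g*`.
If `x` attains the supremum defining `(f + g)*(p)` up to `ε`, the points of `epi f* + epi g*` near
`(p, (f + g)*(p))` split into `ε`-subgradients of `f` and of `g` at `x`, so `p` lies in the closure
of `∂_ε f(x) + ∂_ε g(x)`. Closedness of that sum writes `p = q₁ + q₂` with
`f*(q₁) + g*(q₂) ≤ (f + g)*(p) + 2ε`. The duality formula is the case `p = 0`.
-/

section RealArithmetic

variable {V : Type*} {A : Set (V × ℝ)} {L M : V → ℝ} {s u t₀ : ℝ} {v : V}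

theorem nonpos_of_forall_add_mul_lt {a t₁ : ℝ} (h : ∀ t ≥ t₁, a + s * t < u) : s ≤ 0 := by
  by_contra! hs
  have hlt := h (max t₁ ((u - a) / s)) (le_max_left _ _)
  have hle := mul_le_mul_of_nonneg_left (le_max_right t₁ ((u - a) / s)) hs.le
  rw [mul_div_cancel₀ _ hs.ne'] at hle
  linarith

theorem exists_scaled_separation (hs : s < 0) (hA : ∀ w ∈ A, L w.1 + s * w.2 < u)
    (hv : u < L v + s * t₀) :
    ∃ a u' : ℝ, (∀ w ∈ A, a * L w.1 - w.2 ≤ u') ∧ u' < a * L v - t₀ := by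
  have hσ : 0 < (-s)⁻¹ := inv_pos.mpr (neg_pos.mpr hs)
  have hscale : ∀ x t : ℝ, (-s)⁻¹ * (x + s * t) = (-s)⁻¹ * x - t := fun x t => by
    field_simp [hs.ne]; ring
  refine ⟨(-s)⁻¹, (-s)⁻¹ * u, fun w hw => ?_, ?_⟩
  · rw [← hscale]; exact mul_le_mul_of_nonneg_left (hA w hw).le hσ.le
  · rw [← hscale]; exact mul_lt_mul_of_pos_left hv hσ

/-- Tilting the separating functional by a small multiple of an affine minorant `M` of `A`
makes its slope strictly negative. -/
theorem exists_tilted_separation {c : ℝ} (hs : s ≤ 0) (hA : ∀ w ∈ A, L w.1 + s * w.2 < u)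
    (hv : u < L v + s * t₀) (hM : ∀ w ∈ A, M w.1 - w.2 ≤ c) :
    ∃ a b u' : ℝ, (∀ w ∈ A, a * L w.1 + b * M w.1 - w.2 ≤ u') ∧ u' < a * L v + b * M v - t₀ := by
  obtain ⟨μ, hμ, hμgap⟩ := exists_pos_mul_lt (sub_pos.mpr hv) (c - M v + t₀)
  obtain ⟨a, u', hA', hv'⟩ := exists_scaled_separation (L := fun x => L x + μ * M x)
    (u := u + μ * c) (s := s - μ) (v := v) (t₀ := t₀) (by linarith)
    (fun w hw => by nlinarith [hA w hw, hM w hw]) (by linarith)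
  exact ⟨a, a * μ, u', fun w hw => by linarith [hA' w hw], by linarith⟩

end RealArithmetic

def UpwardInSnd {M : Type*} (A : Set (M × ℝ)) : Prop := ∀ w ∈ A, ∀ t ≥ w.2, (w.1, t) ∈ A

theorem UpwardInSnd.add {M : Type*} [AddCommMonoid M] {A : Set (M × ℝ)} (hA : UpwardInSnd A)
    (B : Set (M × ℝ)) : UpwardInSnd (A + B) := by
  rintro _ ⟨w₁, hw₁, w₂, hw₂, rfl⟩ t ht
  refine ⟨(w₁.1, t - w₂.2), hA w₁ hw₁ _ ?_, w₂, hw₂, by ext <;> simp⟩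
  simp only [Prod.snd_add] at ht
  linarith

theorem exists_separation_of_notMem_closure {M : Type*} [TopologicalSpace M] [AddCommGroup M]
    [Module ℝ M] [IsTopologicalAddGroup M] [ContinuousSMul ℝ M] [LocallyConvexSpace ℝ M]
    {A : Set (M × ℝ)} (hA : Convex ℝ A) (hup : UpwardInSnd A)
    (hne : A.Nonempty) {v : M} {t₀ : ℝ} (hv : (v, t₀) ∉ closure A) :
    ∃ (ℓ : M →L[ℝ] ℝ) (s u : ℝ), s ≤ 0 ∧ (∀ w ∈ A, ℓ w.1 + s * w.2 < u) ∧
      u < ℓ v + s * t₀ := by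
  obtain ⟨Φ, u, hΦA, hΦv⟩ := geometric_hahn_banach_closed_point hA.closure isClosed_closure hv
  have hΦ : ∀ w : M × ℝ, Φ w = Φ.comp (.inl ℝ M ℝ) w.1 + Φ (0, 1) * w.2 := fun w => by
    conv_lhs => rw [show w = (w.1, 0) + w.2 • ((0 : M), (1 : ℝ)) by ext <;> simp]
    rw [map_add, map_smul, smul_eq_mul, mul_comm]; rfl
  have hA' : ∀ w ∈ A, Φ.comp (.inl ℝ M ℝ) w.1 + Φ (0, 1) * w.2 < u := fun w hw =>
    hΦ w ▸ hΦA w (subset_closure hw)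
  obtain ⟨w, hw⟩ := hne
  refine ⟨Φ.comp (.inl ℝ M ℝ), Φ (0, 1), u, ?_, hA', hΦ (v, t₀) ▸ hΦv⟩
  exact nonpos_of_forall_add_mul_lt (u := u) (a := Φ.comp (.inl ℝ M ℝ) w.1)
    fun t ht => hA' (w.1, t) (hup w hw t ht)

def realEpigraph {α : Type*} (f : α → EReal) : Set (α × ℝ) := {w | f w.1 ≤ w.2}

theorem LowerSemicontinuous.isClosed_realEpigraph {α : Type*} [TopologicalSpace α]
    {f : α → EReal} (hf : LowerSemicontinuous f) : IsClosed (realEpigraph f) :=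
  hf.isClosed_epigraph.preimage
    (continuous_fst.prodMk (continuous_coe_real_ereal.comp continuous_snd))

theorem EConvex.convex_realEpigraph {f : X → EReal} (hf : EConvex f) :
    Convex ℝ (realEpigraph f) := by
  rintro ⟨x, tx⟩ hx ⟨y, ty⟩ hy a b ha hb hab
  obtain rfl : b = 1 - a := by linarith
  calc f (a • x + (1 - a) • y) ≤ (a : EReal) * f x + ((1 - a : ℝ) : EReal) * f y :=
        hf x y a ha (by linarith)
    _ ≤ (a : EReal) * tx + ((1 - a : ℝ) : EReal) * ty := by
        gcongr
        exacts [hx, hy]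
    _ = ((a * tx + (1 - a) * ty : ℝ) : EReal) := by norm_cast

theorem upwardInSnd_realEpigraph {α : Type*} {f : α → EReal} : UpwardInSnd (realEpigraph f) :=
  fun _ hw _ ht => hw.trans (EReal.coe_le_coe_iff.mpr ht)

theorem EReal.neg_iInf {ι : Sort*} (h : ι → EReal) : -(⨅ i, h i) = ⨆ i, -h i :=
  EReal.negOrderIso.map_iInf h

namespace WeakDual

variable (q₁ q₂ : WeakDual ℝ X) (x : X)

@[simp]
theorem add_apply : (q₁ + q₂) x = q₁ x + q₂ x := rfl

@[simp]
theorem smul_apply (a : ℝ) : (a • q₁) x = a * q₁ x := rfl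

end WeakDual

-- `WeakDual` is a type synonym, so the instance for `WeakBilin` is not found by itself.
instance : LocallyConvexSpace ℝ (WeakDual ℝ X) := WeakBilin.locallyConvexSpace

theorem WeakDual.exists_forall_apply_eq (ψ : WeakDual ℝ X →L[ℝ] ℝ) :
    ∃ x : X, ∀ q : WeakDual ℝ X, ψ q = q x := by
  obtain ⟨x, rfl⟩ := LinearMap.dualEmbedding_surjective (topDualPairing ℝ X) ψ
  exact ⟨x, fun q => rfl⟩

section Conjugate

variable {f g : X → EReal}

theorem le_fconj (f : X → EReal) (p : WeakDual ℝ X) (x : X) : (p x : EReal) - f x ≤ fconj f p :=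
  le_iSup (fun x => (p x : EReal) - f x) x

theorem fconj_le_coe_iff {q : WeakDual ℝ X} {c : ℝ} :
    fconj f q ≤ c ↔ ∀ x (t : ℝ), f x ≤ t → q x - t ≤ c := by
  refine ⟨fun h x t hx => ?_, fun h => iSup_le fun x => ?_⟩
  · exact_mod_cast (EReal.sub_le_sub le_rfl hx).trans ((le_fconj f q x).trans h)
  · induction hfx : f x using EReal.rec with
    | bot => linarith [h x (q x - c - 1) (hfx ▸ bot_le)]
    | coe a => exact_mod_cast h x a hfx.le
    | top => simp

theorem fconj_ne_bot {x : X} (hx : f x ≠ ⊤) (p : WeakDual ℝ X) : fconj f p ≠ ⊥ := by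
  refine ne_bot_of_le_ne_bot (EReal.coe_ne_bot (p x - (f x).toReal)) ?_
  rw [EReal.coe_sub]
  exact (EReal.sub_le_sub le_rfl (EReal.le_coe_toReal hx)).trans (le_fconj f p x)

theorem EProper.fconj_ne_bot (hf : EProper f) (p : WeakDual ℝ X) : fconj f p ≠ ⊥ :=
  _root_.fconj_ne_bot hf.2.choose_spec p

theorem fconj_zero (f : X → EReal) : fconj f 0 = -⨅ x, f x := by
  rw [EReal.neg_iInf]
  exact iSup_congr fun x => zero_sub (f x)

theorem fconj_add_le (hfb : ∀ x, f x ≠ ⊥) (hgb : ∀ x, g x ≠ ⊥) (q₁ q₂ : WeakDual ℝ X) :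
    fconj (fun y => f y + g y) (q₁ + q₂) ≤ fconj f q₁ + fconj g q₂ := by
  refine iSup_le fun x => le_trans ?_ (add_le_add (le_fconj f q₁ x) (le_fconj g q₂ x))
  have hf := hfb x
  have hg := hgb x
  beta_reduce
  generalize f x = a, g x = b at hf hg ⊢
  induction a <;> induction b <;> simp_all
  norm_cast
  linarith

end Conjugate

section Biconjugate

variable {f : X → EReal}

theorem EProper.exists_separation_realEpigraph (hf : EProper f) (hfl : LowerSemicontinuous f)
    (hfc : EConvex f) {z : X} {b : ℝ} (hb : (b : EReal) < f z) :
    ∃ (ℓ : StrongDual ℝ X) (s u : ℝ), s ≤ 0 ∧ (∀ w ∈ realEpigraph f, ℓ w.1 + s * w.2 < u) ∧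
      u < ℓ z + s * b := by
  obtain ⟨x, hx⟩ := hf.2
  refine exists_separation_of_notMem_closure hfc.convex_realEpigraph upwardInSnd_realEpigraph
    ⟨(x, (f x).toReal), EReal.le_coe_toReal hx⟩ ?_
  rw [hfl.isClosed_realEpigraph.closure_eq]
  exact hb.not_ge

theorem EProper.exists_fconj_le_coe (hf : EProper f) (hfl : LowerSemicontinuous f)
    (hfc : EConvex f) : ∃ (q : WeakDual ℝ X) (c : ℝ), fconj f q ≤ c := by
  obtain ⟨x, hx⟩ := hf.2
  lift f x to ℝ using ⟨hx, hf.1 x⟩ with a ha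
  obtain ⟨ℓ, s, u, -, hA, hv⟩ := hf.exists_separation_realEpigraph hfl hfc (z := x) (b := a - 1)
    (by rw [← ha]; exact_mod_cast sub_one_lt a)
  have hs : s < 0 := by linarith [hA (x, a) ha.ge]
  obtain ⟨c, u', hA', -⟩ := exists_scaled_separation hs hA hv
  exact ⟨StrongDual.toWeakDual (c • ℓ), u',
    fconj_le_coe_iff.mpr fun y t hy => by simpa using hA' (y, t) hy⟩

theorem EProper.exists_fconj_le_sub (hf : EProper f) (hfl : LowerSemicontinuous f)
    (hfc : EConvex f) {z : X} {b : ℝ} (hb : (b : EReal) < f z) :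
    ∃ q : WeakDual ℝ X, fconj f q ≤ ((q z - b : ℝ) : EReal) := by
  obtain ⟨ℓ, s, u, hs, hA, hv⟩ := hf.exists_separation_realEpigraph hfl hfc hb
  obtain ⟨q₀, c, hq₀⟩ := hf.exists_fconj_le_coe hfl hfc
  obtain ⟨a, a', u', hA', hv'⟩ := exists_tilted_separation (M := fun x => q₀ x) hs hA hv
    fun w hw => fconj_le_coe_iff.mp hq₀ w.1 w.2 hw
  refine ⟨StrongDual.toWeakDual (a • ℓ) + a' • q₀, fconj_le_coe_iff.mpr fun y t hy => ?_⟩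
  have := hA' (y, t) hy
  simp only [WeakDual.add_apply, WeakDual.smul_apply, StrongDual.toWeakDual_apply,
    _root_.smul_apply, smul_eq_mul] at this ⊢
  linarith

theorem EProper.le_coe_of_forall_fconj_le (hf : EProper f) (hfl : LowerSemicontinuous f)
    (hfc : EConvex f) {z : X} {c : ℝ} (h : ∀ q (t : ℝ), fconj f q ≤ t → q z - t ≤ c) :
    f z ≤ c := by
  by_contra! hc
  obtain ⟨b, hcb, hbz⟩ := EReal.exists_between_coe_real hc
  obtain ⟨q, hq⟩ := hf.exists_fconj_le_sub hfl hfc hbz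
  have hcb : c < b := by exact_mod_cast hcb
  linarith [h q _ hq]

end Biconjugate

section DualEpigraph

variable {f g : X → EReal}

theorem upwardInSnd_epiConj (f : X → EReal) : UpwardInSnd (epiConj f) :=
  fun _ hw _ ht => hw.trans (EReal.coe_le_coe_iff.mpr ht)

theorem convex_epiConj (f : X → EReal) : Convex ℝ (epiConj f) := by
  rintro ⟨q, t⟩ hq ⟨q', t'⟩ hq' a b ha hb hab
  obtain rfl : b = 1 - a := by linarith
  refine fconj_le_coe_iff.mpr fun x r hx => ?_
  have h₁ := fconj_le_coe_iff.mp hq x r hx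
  have h₂ := fconj_le_coe_iff.mp hq' x r hx
  simp only [Prod.smul_mk, Prod.mk_add_mk, WeakDual.add_apply, WeakDual.smul_apply, smul_eq_mul]
  nlinarith [mul_le_mul_of_nonneg_left h₁ ha, mul_le_mul_of_nonneg_left h₂ hb]

theorem apply_sub_le_of_mem_epiConj_add {x : X} {a c : ℝ} (hfx : f x ≤ a) (hgx : g x ≤ c) :
    ∀ w ∈ epiConj f + epiConj g, w.1 x - w.2 ≤ a + c := by
  rintro _ ⟨w₁, hw₁, w₂, hw₂, rfl⟩
  have h₁ := fconj_le_coe_iff.mp hw₁ x a hfx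
  have h₂ := fconj_le_coe_iff.mp hw₂ x c hgx
  simp only [Prod.fst_add, Prod.snd_add, WeakDual.add_apply]
  linarith

theorem exists_apply_sub_le_of_notMem_closure {E : Set (WeakDual ℝ X × ℝ)} (hE : Convex ℝ E)
    (hup : UpwardInSnd E) (hne : E.Nonempty) {x₀ : X} {c : ℝ}
    (hx₀ : ∀ w ∈ E, w.1 x₀ - w.2 ≤ c) {p : WeakDual ℝ X} {r : ℝ} (hpr : (p, r) ∉ closure E) :
    ∃ (z : X) (u : ℝ), (∀ w ∈ E, w.1 z - w.2 ≤ u) ∧ u < p z - r := by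
  obtain ⟨ψ, s, u, hs, hE', hv⟩ := exists_separation_of_notMem_closure hE hup hne hpr
  obtain ⟨y, hy⟩ := WeakDual.exists_forall_apply_eq ψ
  simp only [hy] at hE' hv
  obtain ⟨a, b, u', hE'', hv'⟩ := exists_tilted_separation (L := fun q : WeakDual ℝ X => q y)
    (M := fun q : WeakDual ℝ X => q x₀) hs hE' hv hx₀
  refine ⟨a • y + b • x₀, u', fun w hw => ?_, ?_⟩
  · simpa using hE'' w hw
  · simpa using hv'

theorem add_le_coe_of_forall_mem_epiConj_add (hf : EProper f) (hfl : LowerSemicontinuous f)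
    (hfc : EConvex f) (hg : EProper g) (hgl : LowerSemicontinuous g) (hgc : EConvex g)
    {z : X} {u : ℝ} (h : ∀ w ∈ epiConj f + epiConj g, w.1 z - w.2 ≤ u) : f z + g z ≤ u := by
  have hfz : ∀ w ∈ epiConj g, f z ≤ ((u - (w.1 z - w.2) : ℝ) : EReal) := fun w hw =>
    hf.le_coe_of_forall_fconj_le hfl hfc fun q t hq => by
      have := h _ (add_mem_add (show (q, t) ∈ epiConj f from hq) hw)
      simp only [Prod.fst_add, Prod.snd_add, WeakDual.add_apply] at this
      linarith
  obtain ⟨q₀, c, hq₀⟩ := hg.exists_fconj_le_coe hgl hgc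
  have hfz_top : f z ≠ ⊤ := ((hfz (q₀, c) hq₀).trans_lt (EReal.coe_lt_top _)).ne
  lift f z to ℝ using ⟨hfz_top, hf.1 z⟩ with a ha
  have hgz : g z ≤ ((u - a : ℝ) : EReal) := hg.le_coe_of_forall_fconj_le hgl hgc fun q t hq => by
    have : a ≤ u - (q z - t) := by exact_mod_cast hfz (q, t) hq
    linarith
  calc (a : EReal) + g z ≤ a + ((u - a : ℝ) : EReal) := add_le_add_right hgz _
    _ = u := by norm_cast; ring

theorem epiConj_add_subset_closure (hf : EProper f) (hfl : LowerSemicontinuous f)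
    (hfc : EConvex f) (hg : EProper g) (hgl : LowerSemicontinuous g) (hgc : EConvex g)
    {x₀ : X} (hx₀ : x₀ ∈ edom f ∩ edom g) :
    epiConj (fun y => f y + g y) ⊆ closure (epiConj f + epiConj g) := by
  rintro ⟨p, r⟩ hpr
  by_contra hcl
  obtain ⟨q₁, t₁, hq₁⟩ := hf.exists_fconj_le_coe hfl hfc
  obtain ⟨q₂, t₂, hq₂⟩ := hg.exists_fconj_le_coe hgl hgc
  obtain ⟨z, u, hzu, hu⟩ := exists_apply_sub_le_of_notMem_closure
    ((convex_epiConj f).add (convex_epiConj g)) ((upwardInSnd_epiConj f).add _)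
    ⟨_, add_mem_add (show (q₁, t₁) ∈ epiConj f from hq₁) (show (q₂, t₂) ∈ epiConj g from hq₂)⟩
    (apply_sub_le_of_mem_epiConj_add (EReal.le_coe_toReal hx₀.1.ne)
      (EReal.le_coe_toReal hx₀.2.ne)) hcl
  have := fconj_le_coe_iff.mp hpr z u
    (add_le_coe_of_forall_mem_epiConj_add hf hfl hfc hg hgl hgc hzu)
  linarith

end DualEpigraph

section EpsSubdifferential

variable {f g : X → EReal}

theorem mem_epsSubdiff_iff {x : X} {a ε : ℝ} {q : WeakDual ℝ X} (hx : f x = a) :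
    q ∈ epsSubdiff f ε x ↔ fconj f q ≤ ((q x - a + ε : ℝ) : EReal) := by
  simp only [epsSubdiff, mem_ofPred_eq, hx, EReal.coe_ne_top, EReal.coe_ne_bot, ne_eq,
    not_false_eq_true, true_and, map_sub, fconj_le_coe_iff]
  refine forall_congr' fun y => ?_
  induction f y using EReal.rec with
  | bot =>
    simp only [EReal.bot_add, le_bot_iff, EReal.add_eq_bot_iff, EReal.coe_ne_bot, or_self,
      bot_le, forall_const, false_iff, not_forall, not_le]
    exact ⟨q y - q x + a - ε - 1, by linarith⟩
  | top => simp
  | coe b =>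
    refine ⟨fun h t hbt => ?_, fun h => ?_⟩
    · have : q y - q x + a ≤ b + ε := by exact_mod_cast h
      have : b ≤ t := by exact_mod_cast hbt
      linarith
    · have := h b le_rfl
      exact_mod_cast (by linarith : q y - q x + a ≤ b + ε)

theorem mem_closure_epsSubdiff_add {x : X} {a c ε r : ℝ} {p : WeakDual ℝ X} (hfx : f x = a)
    (hgx : g x = c) (hpr : (p, r) ∈ closure (epiConj f + epiConj g))
    (hε : r - p x + a + c < ε) : p ∈ closure (epsSubdiff f ε x + epsSubdiff g ε x) := by
  have hV : IsOpen {w : WeakDual ℝ X × ℝ | w.2 - w.1 x + a + c < ε} :=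
    isOpen_lt (((continuous_snd.sub ((WeakDual.eval_continuous x).comp continuous_fst)).add
      continuous_const).add continuous_const) continuous_const
  refine closure_mono ?_ (mem_closure_image continuous_fst.continuousAt
    (hV.inter_closure ⟨hε, hpr⟩))
  rintro _ ⟨_, ⟨hwV, w₁, hw₁, w₂, hw₂, rfl⟩, rfl⟩
  have h₁ := fconj_le_coe_iff.mp hw₁ x a hfx.le
  have h₂ := fconj_le_coe_iff.mp hw₂ x c hgx.le
  simp only [mem_ofPred_eq, Prod.snd_add, Prod.fst_add, WeakDual.add_apply] at hwV
  refine add_mem_add ((mem_epsSubdiff_iff hfx).mpr (hw₁.trans ?_))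
    ((mem_epsSubdiff_iff hgx).mpr (hw₂.trans ?_)) <;>
  exact EReal.coe_le_coe_iff.mpr (by linarith)

end EpsSubdifferential

section Duality

variable {f g : X → EReal}

theorem exists_fconj_add_fconj_sub_le (hf : EProper f) (hfl : LowerSemicontinuous f)
    (hfc : EConvex f) (hg : EProper g) (hgl : LowerSemicontinuous g) (hgc : EConvex g)
    {x₀ : X} (hx₀ : x₀ ∈ edom f ∩ edom g) {x : X} {a c ε r : ℝ} {p : WeakDual ℝ X}
    (hcl : IsClosed (epsSubdiff f ε x + epsSubdiff g ε x))
    (hpr : fconj (fun y => f y + g y) p ≤ r) (hfx : f x = a) (hgx : g x = c)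
    (hε : r - p x + a + c < ε) :
    ∃ q, fconj f q + fconj g (p - q) ≤ ((p x - a - c + 2 * ε : ℝ) : EReal) := by
  have hp := mem_closure_epsSubdiff_add hfx hgx
    (epiConj_add_subset_closure hf hfl hfc hg hgl hgc hx₀ (show (p, r) ∈ _ from hpr)) hε
  rw [hcl.closure_eq] at hp
  obtain ⟨q₁, hq₁, q₂, hq₂, rfl⟩ := hp
  refine ⟨q₁, ?_⟩
  rw [add_sub_cancel_left]
  calc fconj f q₁ + fconj g q₂
      ≤ ((q₁ x - a + ε : ℝ) : EReal) + ((q₂ x - c + ε : ℝ) : EReal) :=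
        add_le_add ((mem_epsSubdiff_iff hfx).mp hq₁) ((mem_epsSubdiff_iff hgx).mp hq₂)
    _ = (((q₁ + q₂) x - a - c + 2 * ε : ℝ) : EReal) := by
        rw [WeakDual.add_apply]; norm_cast; ring

theorem iInf_fconj_add_fconj_sub_le (hf : EProper f) (hfl : LowerSemicontinuous f)
    (hfc : EConvex f) (hg : EProper g) (hgl : LowerSemicontinuous g) (hgc : EConvex g)
    {x₀ : X} (hx₀ : x₀ ∈ edom f ∩ edom g)
    (hcl : ∀ x ∈ edom f ∩ edom g, ∀ ε > (0 : ℝ),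
      IsClosed (epsSubdiff f ε x + epsSubdiff g ε x)) (p : WeakDual ℝ X) :
    ⨅ q, fconj f q + fconj g (p - q) ≤ fconj (fun y => f y + g y) p := by
  refine EReal.le_of_forall_lt_iff_le.mp fun β hβ => ?_
  have hbot := fconj_ne_bot (f := fun y => f y + g y) (EReal.add_ne_top hx₀.1.ne hx₀.2.ne) p
  lift fconj (fun y => f y + g y) p to ℝ using ⟨hβ.ne_top, hbot⟩ with α hα
  have hαβ : α < β := by exact_mod_cast hβ
  set ε := (β - α) / 3 with hε
  obtain ⟨x, hx⟩ := lt_iSup_iff.mp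
    (show ((α - ε : ℝ) : EReal) < fconj (fun y => f y + g y) p by
      rw [← hα]; exact_mod_cast (by linarith : α - ε < α))
  have hxα := hα ▸ le_fconj (fun y => f y + g y) p x
  obtain ⟨hfx, hgx⟩ := (EReal.add_ne_top_iff_ne_top₂ (hf.1 x) (hg.1 x)).mp
    fun h => by simp [h] at hx
  lift f x to ℝ using ⟨hfx, hf.1 x⟩ with a ha
  lift g x to ℝ using ⟨hgx, hg.1 x⟩ with c hc
  have hx' : α - ε < p x - (a + c) := by exact_mod_cast hx
  have hxα' : p x - (a + c) ≤ α := by exact_mod_cast hxα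
  have hxdom : x ∈ edom f ∩ edom g := ⟨by simp [edom, ← ha], by simp [edom, ← hc]⟩
  obtain ⟨q, hq⟩ := exists_fconj_add_fconj_sub_le hf hfl hfc hg hgl hgc hx₀
    (hcl x hxdom ε (by linarith)) hα.ge ha.symm hc.symm (by linarith)
  exact (iInf_le _ q).trans (hq.trans (EReal.coe_le_coe_iff.mpr (by linarith)))

theorem fconj_add_eq_iInf (hf : EProper f) (hfl : LowerSemicontinuous f)
    (hfc : EConvex f) (hg : EProper g) (hgl : LowerSemicontinuous g) (hgc : EConvex g)
    (hdom : (edom f ∩ edom g).Nonempty)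
    (hcl : ∀ x ∈ edom f ∩ edom g, ∀ ε > (0 : ℝ),
      IsClosed (epsSubdiff f ε x + epsSubdiff g ε x)) (p : WeakDual ℝ X) :
    fconj (fun y => f y + g y) p = ⨅ q, fconj f q + fconj g (p - q) :=
  le_antisymm (le_iInf fun q => by simpa using fconj_add_le hf.1 hg.1 q (p - q))
    (iInf_fconj_add_fconj_sub_le hf hfl hfc hg hgl hgc hdom.some_mem hcl p)

end Duality

theorem stmt5_general {X : Type*} [NormedAddCommGroup X] [NormedSpace ℝ X]
    (f g : X → EReal) (hf : EProper f) (hg : EProper g)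
    (hfl : LowerSemicontinuous f) (hgl : LowerSemicontinuous g)
    (hfc : EConvex f) (hgc : EConvex g)
    (hdom : (edom f ∩ edom g).Nonempty)
    (hcl : ∀ x ∈ edom f ∩ edom g, ∀ ε > (0 : ℝ),
      IsClosed (epsSubdiff f ε x + epsSubdiff g ε x)) :
    (∀ p : WeakDual ℝ X,
      fconj (fun y => f y + g y) p = ⨅ q : WeakDual ℝ X, fconj f q + fconj g (p - q)) ∧
    (⨅ x : X, (f x + g x)) = ⨆ p : WeakDual ℝ X, (-(fconj f p) - fconj g (-p)) := by
  have hconj := fconj_add_eq_iInf hf hfl hfc hg hgl hgc hdom hcl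
  refine ⟨hconj, ?_⟩
  rw [← neg_neg (⨅ x, f x + g x), ← fconj_zero, hconj, EReal.neg_iInf]
  refine iSup_congr fun q => ?_
  rw [zero_sub, EReal.neg_add (.inl (hf.fconj_ne_bot q)) (.inr (hg.fconj_ne_bot (-q)))]

theorem stmt5 {X : Type*} [NormedAddCommGroup X] [NormedSpace ℝ X] [CompleteSpace X]
    (f g : X → EReal) (hf : EProper f) (hg : EProper g)
    (hfl : LowerSemicontinuous f) (hgl : LowerSemicontinuous g)
    (hfc : EConvex f) (hgc : EConvex g)
    (hdom : (edom f ∩ edom g).Nonempty)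
    (hcl : ∀ x ∈ edom f ∩ edom g, ∀ ε > (0 : ℝ),
      IsClosed (epsSubdiff f ε x + epsSubdiff g ε x)) :
    (∀ p : WeakDual ℝ X,
      fconj (fun y => f y + g y) p = ⨅ q : WeakDual ℝ X, fconj f q + fconj g (p - q)) ∧
    (⨅ x : X, (f x + g x)) = ⨆ p : WeakDual ℝ X, (-(fconj f p) - fconj g (-p)) :=
  stmt5_general f g hf hg hfl hgl hfc hgc hdom hcl
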